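/- Let R be a subring of a division ring T. Then the rational closure of R in T is a division ring and equals the division closure of R in T. -/

import Mathlib

/-- The rational closure of a subset `R` of a ring `T`. -/
def ratClosure {T : Type*} [Ring T] (R : Set T) : Set T :=
  {x | ∃ (n : ℕ) (A B : Matrix (Fin n) (Fin n) T),
    (∀ i j, A i j ∈ R) ∧ A * B = 1 ∧ B * A = 1 ∧ ∃ i j, x = B i j}

/-- The division closure of a subring `R` of a ring `T`. -/
def divClosure {T : Type*} [Ring T] (R : Subring T) : Subring T :=
  sInf {S : Subring T | R ≤ S ∧ ∀ x ∈ S, ∀ y : T, x * y = 1 ∧ y * x = 1 → y ∈ S}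

/-!
Every subring containing `R` and closed under inversion contains the division closure, so it
suffices to show that the rational closure is such a subring and that it lies in every subfield
`K ⊇ R`. The rational closure is a subring because, for `A⁻¹ = B` and `C⁻¹ = D`, the block matrix
`[A, -U; 0, C]` has inverse `[B, BUD; 0, D]`, and a suitable choice of `U` makes an entry of `BUD`
equal to `B i j * D k l` or to `B i j + D k l`. If `x = B i j ≠ 0`, the bordered matrix
`[A, e_j; e_iᵀ, 0]` is invertible and `-x⁻¹` is the corner entry of its inverse. Conversely, a
matrix over a subfield `K` that becomes invertible over `T` is already invertible over `K`, since
matrix rings over a division ring are Artinian, where a non-zero-divisor is a unit.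
-/

theorem IsArtinianRing.isLocalHom_of_injective {R S : Type*} [Ring R] [IsArtinianRing R]
    [Semiring S] {f : R →+* S} (hf : Function.Injective f) : IsLocalHom f :=
  ⟨fun _ ha => isUnit_iff_isRightRegular.mpr fun x y hxy =>
    hf <| ha.isRegular.right <| by simpa only [← map_mul] using congrArg f hxy⟩

theorem Subring.mul_apply_mem {T ι κ μ : Type*} [Ring T] [Fintype κ] {S : Subring T}
    {M : Matrix ι κ T} {N : Matrix κ μ T} (hM : ∀ i j, M i j ∈ S) (hN : ∀ i j, N i j ∈ S)
    (i : ι) (k : μ) : (M * N) i k ∈ S :=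
  S.sum_mem fun j _ => S.mul_mem (hM i j) (hN j k)

theorem Subring.single_one_apply_mem {T ι κ : Type*} [Ring T] [DecidableEq ι] [DecidableEq κ]
    (S : Subring T) (a : ι) (b : κ) (i : ι) (j : κ) : Matrix.single a b (1 : T) i j ∈ S :=
  (Matrix.single_mem_matrix S.zero_mem).2 S.one_mem i j

namespace Matrix

variable {ι κ T : Type*} [Fintype ι] [Fintype κ] [DecidableEq ι] [DecidableEq κ] [Ring T]
  {A B : Matrix ι ι T}

theorem fromBlocks_zero₂₁_mul_eq_one {C D : Matrix κ κ T} (U : Matrix ι κ T)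
    (hAB : A * B = 1) (hCD : C * D = 1) :
    fromBlocks A (-U) 0 C * fromBlocks B (B * U * D) 0 D = 1 := by
  simp only [fromBlocks_multiply, hAB, hCD, ← Matrix.mul_assoc, Matrix.one_mul, Matrix.neg_mul,
    Matrix.zero_mul, Matrix.mul_zero, add_zero, zero_add, add_neg_cancel, fromBlocks_one]

theorem fromBlocks_mul_fromBlocks_zero₂₁_eq_one {C D : Matrix κ κ T} (U : Matrix ι κ T)
    (hBA : B * A = 1) (hDC : D * C = 1) :
    fromBlocks B (B * U * D) 0 D * fromBlocks A (-U) 0 C = 1 := by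
  simp only [fromBlocks_multiply, hBA, hDC, Matrix.mul_assoc, Matrix.mul_one, Matrix.mul_neg,
    Matrix.zero_mul, Matrix.mul_zero, add_zero, neg_zero, zero_add, neg_add_cancel,
    fromBlocks_one]

theorem fromBlocks_zero₂₂_mul_eq_one (b : Matrix ι κ T) (c : Matrix κ ι T) {s : Matrix κ κ T}
    (hAB : A * B = 1) (hs : c * B * b * s = 1) :
    fromBlocks A b c 0 * fromBlocks (B - B * b * s * c * B) (B * b * s) (s * c * B) (-s) = 1 := by
  simp only [fromBlocks_multiply, Matrix.mul_sub, ← Matrix.mul_assoc, hAB, hs, Matrix.one_mul,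
    Matrix.zero_mul, Matrix.mul_neg, add_zero, neg_zero, sub_self, sub_add_cancel, add_neg_cancel,
    fromBlocks_one]

theorem fromBlocks_mul_fromBlocks_zero₂₂_eq_one (b : Matrix ι κ T) (c : Matrix κ ι T)
    {s : Matrix κ κ T} (hBA : B * A = 1) (hs : s * (c * B * b) = 1) :
    fromBlocks (B - B * b * s * c * B) (B * b * s) (s * c * B) (-s) * fromBlocks A b c 0 = 1 := by
  simp only [Matrix.mul_assoc] at hs
  simp only [fromBlocks_multiply, Matrix.sub_mul, Matrix.mul_assoc, hBA, hs, Matrix.mul_one,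
    Matrix.mul_zero, Matrix.neg_mul, add_zero, sub_self, sub_add_cancel, add_neg_cancel,
    fromBlocks_one]

end Matrix

section RatClosure

open Matrix

variable {T : Type*}

section Ring

variable [Ring T] (R : Subring T)

theorem mem_ratClosure_of_mul_eq_one {ι : Type*} [Fintype ι] [DecidableEq ι]
    {A B : Matrix ι ι T} (hA : ∀ i j, A i j ∈ R) (hAB : A * B = 1) (hBA : B * A = 1) (i j : ι) :
    B i j ∈ ratClosure (R : Set T) := by
  let e := Fintype.equivFin ι
  refine ⟨_, reindex e e A, reindex e e B, fun _ _ => hA _ _, ?_, ?_, e i, e j, by simp⟩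
  · rw [reindex_apply, reindex_apply, submatrix_mul_equiv, hAB, submatrix_one_equiv]
  · rw [reindex_apply, reindex_apply, submatrix_mul_equiv, hBA, submatrix_one_equiv]

theorem mul_mul_apply_mem_ratClosure {ι κ : Type*} [Fintype ι] [Fintype κ] [DecidableEq ι]
    [DecidableEq κ] {A B : Matrix ι ι T} {C D : Matrix κ κ T} {U : Matrix ι κ T}
    (hA : ∀ i j, A i j ∈ R) (hC : ∀ i j, C i j ∈ R) (hU : ∀ i j, U i j ∈ R)
    (hAB : A * B = 1) (hBA : B * A = 1) (hCD : C * D = 1) (hDC : D * C = 1) (i : ι) (l : κ) :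
    (B * U * D) i l ∈ ratClosure (R : Set T) := by
  have hP : ∀ p q, fromBlocks A (-U) 0 C p q ∈ R := by
    rintro (p | p) (q | q) <;> simp [hA, hC, hU]
  simpa using mem_ratClosure_of_mul_eq_one R hP (fromBlocks_zero₂₁_mul_eq_one U hAB hCD)
    (fromBlocks_mul_fromBlocks_zero₂₁_eq_one U hBA hDC) (.inl i) (.inr l)

theorem subset_ratClosure : (R : Set T) ⊆ ratClosure (R : Set T) := fun r hr => by
  simpa using mul_mul_apply_mem_ratClosure R (A := 1) (B := 1) (C := 1) (D := 1)
    (U := of fun _ _ => r) (by simp) (by simp) (fun _ _ => hr) (mul_one _) (mul_one _)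
    (mul_one _) (mul_one _) () ()

theorem neg_mem_ratClosure {x : T} (hx : x ∈ ratClosure (R : Set T)) :
    -x ∈ ratClosure (R : Set T) := by
  obtain ⟨n, A, B, hA, hAB, hBA, i, j, rfl⟩ := hx
  simpa using mem_ratClosure_of_mul_eq_one R (A := -A) (B := -B) (fun p q => R.neg_mem (hA p q))
    (by simp [hAB]) (by simp [hBA]) i j

theorem mul_mem_ratClosure {x y : T} (hx : x ∈ ratClosure (R : Set T))
    (hy : y ∈ ratClosure (R : Set T)) : x * y ∈ ratClosure (R : Set T) := by
  obtain ⟨n, A, B, hA, hAB, hBA, i, j, rfl⟩ := hx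
  obtain ⟨m, C, D, hC, hCD, hDC, k, l, rfl⟩ := hy
  have hBUD : (B * single j k (1 : T) * D) i l = B i j * D k l := by
    rw [mul_apply, Finset.sum_eq_single k (fun q _ hq => by simp [hq]) (by simp),
      mul_single_apply_same, mul_one]
  simpa only [hBUD] using mul_mul_apply_mem_ratClosure R hA hC (R.single_one_apply_mem j k)
    hAB hBA hCD hDC i l

theorem add_mem_ratClosure {x y : T} (hx : x ∈ ratClosure (R : Set T))
    (hy : y ∈ ratClosure (R : Set T)) : x + y ∈ ratClosure (R : Set T) := by
  obtain ⟨n, A, B, hA, hAB, hBA, i, j, rfl⟩ := hx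
  obtain ⟨m, C, D, hC, hCD, hDC, k, l, rfl⟩ := hy
  have hU : ∀ p q, (single j l (1 : T) * C + A * single i k (1 : T)) p q ∈ R := fun p q =>
    R.add_mem (Subring.mul_apply_mem (R.single_one_apply_mem j l) hC p q)
      (Subring.mul_apply_mem hA (R.single_one_apply_mem i k) p q)
  have hBUD : B * (single j l (1 : T) * C + A * single i k (1 : T)) * D =
      B * single j l (1 : T) + single i k (1 : T) * D := by
    rw [Matrix.mul_add, Matrix.add_mul, ← Matrix.mul_assoc, Matrix.mul_assoc _ C, hCD,
      ← Matrix.mul_assoc B, hBA, Matrix.mul_one, Matrix.one_mul]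
  simpa [hBUD] using mul_mul_apply_mem_ratClosure R hA hC hU hAB hBA hCD hDC i l

def ratClosureSubring : Subring T where
  carrier := ratClosure (R : Set T)
  mul_mem' := mul_mem_ratClosure R
  one_mem' := subset_ratClosure R R.one_mem
  add_mem' := add_mem_ratClosure R
  zero_mem' := subset_ratClosure R R.zero_mem
  neg_mem' := neg_mem_ratClosure R

end Ring

variable [DivisionRing T]

theorem inv_mem_ratClosure (R : Subring T) {x : T} (hx : x ∈ ratClosure (R : Set T)) :
    x⁻¹ ∈ ratClosure (R : Set T) := by
  rcases eq_or_ne x 0 with rfl | hx0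
  · simpa using hx
  obtain ⟨n, A, B, hA, hAB, hBA, i, j, rfl⟩ := hx
  let b : Matrix (Fin n) Unit T := single j () 1
  let c : Matrix Unit (Fin n) T := single () i 1
  have hcBb : c * B * b = scalar Unit (B i j) := by
    ext ⟨⟩ ⟨⟩
    simp [b, c]
  let s := scalar Unit (B i j)⁻¹
  have hs : c * B * b * s = 1 := by
    rw [hcBb, ← map_mul, mul_inv_cancel₀ hx0, map_one]
  have hs' : s * (c * B * b) = 1 := by
    rw [hcBb, ← map_mul, inv_mul_cancel₀ hx0, map_one]
  have hP : ∀ p q, fromBlocks A b c 0 p q ∈ R := by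
    rintro (p | p) (q | q)
    exacts [hA p q, R.single_one_apply_mem _ _ p q, R.single_one_apply_mem _ _ p q, R.zero_mem]
  have hcorner := mem_ratClosure_of_mul_eq_one R hP (fromBlocks_zero₂₂_mul_eq_one b c hAB hs)
    (fromBlocks_mul_fromBlocks_zero₂₂_eq_one b c hBA hs') (.inr ()) (.inr ())
  simpa [s] using neg_mem_ratClosure R hcorner

def ratClosureSubfield (R : Subring T) : Subfield T where
  __ := ratClosureSubring R
  inv_mem' _ := inv_mem_ratClosure R

theorem ratClosure_subset {R : Set T} {K : Subfield T} (hRK : R ⊆ K) : ratClosure R ⊆ K := by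
  rintro _ ⟨n, A, B, hA, hAB, hBA, i, j, rfl⟩
  let f : Matrix (Fin n) (Fin n) K →+* Matrix (Fin n) (Fin n) T := K.subtype.mapMatrix
  have := IsArtinianRing.isLocalHom_of_injective (f := f) (map_injective Subtype.val_injective)
  let A' : Matrix (Fin n) (Fin n) K := of fun p q => ⟨A p q, hRK (hA p q)⟩
  have hA' : f A' = A := rfl
  obtain ⟨C, hC⟩ := (IsUnit.of_map f A' (hA' ▸ ⟨⟨A, B, hAB, hBA⟩, rfl⟩)).exists_right_inv
  have hCB : f C = B := by
    rw [← one_mul (f C), ← hBA, mul_assoc, ← hA', ← map_mul, hC, map_one, mul_one]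
  exact hCB ▸ (C i j).2

end RatClosure

section DivClosure

variable {T : Type*} [DivisionRing T] (R : Subring T)

theorem le_divClosure : R ≤ divClosure R :=
  le_sInf fun _ hS => hS.1

theorem inv_mem_divClosure {x : T} (hx : x ∈ divClosure R) : x⁻¹ ∈ divClosure R := by
  rcases eq_or_ne x 0 with rfl | hx0
  · rw [inv_zero]
    exact zero_mem _
  exact Subring.mem_sInf.2 fun S hS =>
    hS.2 x (Subring.mem_sInf.1 hx S hS) _ ⟨mul_inv_cancel₀ hx0, inv_mul_cancel₀ hx0⟩

def divClosureSubfield : Subfield T where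
  __ := divClosure R
  inv_mem' _ := inv_mem_divClosure R

theorem divClosure_le {K : Subfield T} (hRK : R ≤ K.toSubring) : divClosure R ≤ K.toSubring :=
  sInf_le ⟨hRK, fun _ hx _ hxy => eq_inv_of_mul_eq_one_left hxy.2 ▸ K.inv_mem hx⟩

end DivClosure

/-- If `T` is a division ring, then the rational closure of a subring `R` of `T`
is a division ring (closed under inverses of its nonzero elements) and equals the division
closure of `R` in `T`. -/
theorem stmt_6 {T : Type*} [DivisionRing T] (R : Subring T) :
    (∀ x ∈ ratClosure (R : Set T), x ≠ 0 → x⁻¹ ∈ ratClosure (R : Set T)) ∧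
    ratClosure (R : Set T) = (divClosure R : Set T) :=
  ⟨fun _ hx _ => inv_mem_ratClosure R hx,
    subset_antisymm (ratClosure_subset (K := divClosureSubfield R) (le_divClosure R))
      (divClosure_le R (K := ratClosureSubfield R) (subset_ratClosure R))⟩
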